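/- Duality gap bound (Theorem 1): for the min-max association MILP, p* − d* ≤ (N+1)(ϱ + max_{j∈M} ϱ_j), where ϱ = max_{i∈N, j∈M_i} β_{ij} and ϱ_j = min_{i∈N_j} β_{ij}. In particular, the bound is independent of the number of clients M. -/

import Mathlib

/-!
The LP relaxation `min_x max_i load_i x` over fractional assignments attains its optimum `v`.
Separating the convex set of fractional load vectors from the open orthant `{w | ∀ i, w i < v}`
gives weights `λ` in the simplex with `∑ i, λ i * z i ≥ v` on that set; at the assignment sending
each client to a minimiser of `β i j * λ i` this sum is `dualFun λ`, so `v ≤ d*`. Conversely, conic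
Carathéodory applied to the vectors `(β i j • e_i, e_j)` replaces an optimal fractional
assignment by one with the same loads and at most `|N| + |M|` nonzero entries. Then at most `|N|`
clients are split, and sending each of them to its cheapest AP raises every load by at most
`|N| · max_j ϱ_j`, so `p* ≤ v + |N| · max_j ϱ_j ≤ d* + |N| · max_j ϱ_j`.
-/

open Finset

/-- Binary feasibility. -/
def feasBin {M N : Type*} [Fintype N] (Nj : M → Finset N) (x : N → M → ℝ) : Prop :=
  (∀ i j, x i j = 0 ∨ x i j = 1) ∧ ∀ j, ∑ i ∈ Nj j, x i j = 1

/-- The maximum AP utilization. -/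
def maxLoad {M N : Type*} [Fintype M] [Fintype N] [Nonempty N] [DecidableEq N]
    (Nj : M → Finset N) (β : N → M → ℝ) (x : N → M → ℝ) : ℝ :=
  Finset.univ.sup' Finset.univ_nonempty
    (fun i => ∑ j ∈ Finset.univ.filter (fun j => i ∈ Nj j), β i j * x i j)

/-- The dual function `g(λ) = ∑_j min_{i ∈ N_j} β i j * λ i`. -/
def dualFun {M N : Type*} [Fintype M] [Fintype N]
    (Nj : M → Finset N) (hNj : ∀ j, (Nj j).Nonempty) (β : N → M → ℝ)
    (lam : N → ℝ) : ℝ :=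
  ∑ j, (Nj j).inf' (hNj j) (fun i => β i j * lam i)

section Caratheodory

variable {ι R V : Type*} [Fintype ι] [Field R] [LinearOrder R] [IsStrictOrderedRing R]
  [AddCommGroup V] [Module R V]

lemma exists_sub_mul_nonneg_and_eq_zero (c g : ι → R) (hc : ∀ k, 0 ≤ c k)
    (hgc : ∀ k, c k = 0 → g k = 0) (hg : ∃ k, 0 < g k) :
    ∃ τ, (∀ k, 0 ≤ c k - τ * g k) ∧ ∃ k, c k ≠ 0 ∧ c k - τ * g k = 0 := by
  classical
  obtain ⟨k₀, hk₀⟩ := hg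
  obtain ⟨k₁, hk₁, hmin⟩ := (univ.filter fun k => 0 < g k).exists_min_image (fun k => c k / g k)
    ⟨k₀, by simpa using hk₀⟩
  have hgk₁ : 0 < g k₁ := (mem_filter.1 hk₁).2
  refine ⟨c k₁ / g k₁, fun k => ?_, k₁, fun h => hgk₁.ne' (hgc k₁ h), by field_simp; ring⟩
  rcases le_or_gt (g k) 0 with hk | hk
  · nlinarith [div_nonneg (hc k₁) hgk₁.le, hc k]
  · have := hmin k (by simpa using hk)
    rw [div_le_div_iff₀ hgk₁ hk] at this
    rw [sub_nonneg, div_mul_eq_mul_div, div_le_iff₀ hgk₁]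
    linarith

lemma exists_pos_sum_smul_eq_zero_of_not_linearIndepOn {v : ι → V} {s : Finset ι}
    (h : ¬LinearIndepOn R v (s : Set ι)) :
    ∃ g : ι → R, ∑ k, g k • v k = 0 ∧ (∀ k ∉ s, g k = 0) ∧ ∃ k, 0 < g k := by
  classical
  obtain ⟨g, hg, k, hks, hgk⟩ := not_linearIndepOn_finset_iff.1 h
  have hsum : ∑ k, (if k ∈ s then g k else 0) • v k = 0 := by
    simpa [ite_smul, Finset.sum_ite_mem] using hg
  rcases hgk.lt_or_gt with hneg | hpos
  · refine ⟨fun k => -(if k ∈ s then g k else 0), ?_, fun k hk => by simp [hk], k, by simpa [hks]⟩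
    simp only [neg_smul, sum_neg_distrib, hsum, neg_zero]
  · exact ⟨fun k => if k ∈ s then g k else 0, hsum, fun k hk => by simp [hk], k, by simpa [hks]⟩

/-- Conic Carathéodory theorem. -/
theorem exists_nonneg_sum_smul_eq_linearIndepOn (v : ι → V) (c : ι → R) (hc : ∀ k, 0 ≤ c k) :
    ∃ c' : ι → R, (∀ k, 0 ≤ c' k) ∧ (∀ k, c k = 0 → c' k = 0) ∧
      ∑ k, c' k • v k = ∑ k, c k • v k ∧
      LinearIndepOn R v ((univ.filter fun k => c' k ≠ 0 : Finset ι) : Set ι) := by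
  classical
  induction hn : #(univ.filter fun k => c k ≠ 0) using Nat.strong_induction_on generalizing c with
  | _ n ih =>
  by_cases hind : LinearIndepOn R v ((univ.filter fun k => c k ≠ 0 : Finset ι) : Set ι)
  · exact ⟨c, hc, fun _ => id, rfl, hind⟩
  obtain ⟨g, hg, hgs, hgpos⟩ := exists_pos_sum_smul_eq_zero_of_not_linearIndepOn hind
  have hgc : ∀ k, c k = 0 → g k = 0 := fun k hk => hgs k (by simp [hk])
  obtain ⟨τ, hτ, k₁, hck₁, hk₁⟩ := exists_sub_mul_nonneg_and_eq_zero c g hc hgc hgpos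
  have hsupp : (univ.filter fun k => c k - τ * g k ≠ 0) ⊂ univ.filter fun k => c k ≠ 0 := by
    refine ⟨fun k => ?_, fun hsub => by simpa [hk₁] using hsub (mem_filter.2 ⟨mem_univ _, hck₁⟩)⟩
    simp only [mem_filter, mem_univ, true_and]
    exact fun hk hck => hk (by simp [hck, hgc k hck])
  obtain ⟨c', hc'0, hc'c, hc'v, hc'ind⟩ := ih _ (hn ▸ card_lt_card hsupp) _ hτ rfl
  refine ⟨c', hc'0, fun k hk => hc'c k (by simp [hk, hgc k hk]), ?_, hc'ind⟩
  simp only [hc'v, sub_smul, sum_sub_distrib, mul_smul, ← smul_sum, hg, smul_zero, sub_zero]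

end Caratheodory

lemma LinearMap.nonneg_of_forall_sub_smul_mem {E : Type*} [AddCommGroup E] [Module ℝ E]
    (f : E →ₗ[ℝ] ℝ) {U : Set E} {u : ℝ} (hf : ∀ w ∈ U, f w < u) {a e : E}
    (hU : ∀ t : ℝ, 0 ≤ t → a - t • e ∈ U) : 0 ≤ f e := by
  by_contra! he
  have ha : f a < u := by simpa using hf _ (hU 0 le_rfl)
  have := hf _ (hU ((u - f a) / -f e) (div_nonneg (by linarith) (by linarith)))
  have hcancel : (u - f a) / -f e * f e = -(u - f a) := by field_simp [he.ne]
  rw [map_sub, map_smul, smul_eq_mul, hcancel] at this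
  linarith

theorem exists_mem_stdSimplex_le_sum_mul {N : Type*} [Fintype N] {Z : Set (N → ℝ)}
    (hZ : Convex ℝ Z) (hZne : Z.Nonempty) {v : ℝ} (h : ∀ z ∈ Z, ∃ i, v ≤ z i) :
    ∃ w ∈ stdSimplex ℝ N, ∀ z ∈ Z, v ≤ ∑ i, w i * z i := by
  classical
  set U : Set (N → ℝ) := Set.univ.pi fun _ => Set.Iio v
  have hUZ : Disjoint U Z := Set.disjoint_left.2 fun w hw hwZ => by
    obtain ⟨i, hi⟩ := h w hwZ
    exact (hw i (Set.mem_univ i)).not_ge hi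
  obtain ⟨f, u, hfU, hfZ⟩ := geometric_hahn_banach_open (convex_pi fun _ _ => convex_Iio v)
    (isOpen_set_pi Set.finite_univ fun _ _ => isOpen_Iio) hZ hUZ
  set μ : N → ℝ := fun i => f fun j => if i = j then 1 else 0
  have hf : ∀ w, f w = ∑ i, μ i * w i := fun w => by
    simpa [mul_comm] using LinearMap.pi_apply_eq_sum_univ (f : (N → ℝ) →ₗ[ℝ] ℝ) w
  have hconst : ∀ c < v, c * ∑ i, μ i < u := fun c hc => by
    simpa [hf, mul_sum, mul_comm] using hfU (fun _ => c) fun i _ => hc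
  have hμ : ∀ i, 0 ≤ μ i := fun i =>
    (f : (N → ℝ) →ₗ[ℝ] ℝ).nonneg_of_forall_sub_smul_mem hfU (a := fun _ => v - 1) fun t ht j _ => by
      simp only [Set.mem_Iio, Pi.sub_apply, Pi.smul_apply, smul_eq_mul]
      split_ifs <;> linarith
  have hS : 0 < ∑ i, μ i := by
    refine (sum_nonneg fun i _ => hμ i).lt_of_ne fun hS => ?_
    obtain ⟨z, hz⟩ := hZne
    have hμ0 : ∀ i, μ i = 0 :=
      fun i => (sum_eq_zero_iff_of_nonneg fun i _ => hμ i).1 hS.symm i (mem_univ i)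
    have hu : 0 < u := by simpa [← hS] using hconst (v - 1) (by linarith)
    have := hfZ z hz
    simp only [hf, hμ0, zero_mul, sum_const_zero] at this
    linarith
  refine ⟨fun i => μ i / ∑ k, μ k,
    ⟨fun i => div_nonneg (hμ i) hS.le, by rw [← sum_div, div_self hS.ne']⟩, fun z hz => ?_⟩
  by_contra! hlt
  have hscale : (∑ i, μ i / (∑ k, μ k) * z i) * ∑ k, μ k = ∑ i, μ i * z i := by
    rw [sum_mul]
    exact sum_congr rfl fun i _ => by field_simp
  linarith [hconst _ hlt, hfZ z hz, hf z]

lemma exists_eq_one_of_sum_eq_one_of_card_le_one {ι : Type*} [Fintype ι] {w : ι → ℝ}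
    (hw : ∑ i, w i = 1) (h : #(univ.filter fun i => w i ≠ 0) ≤ 1) : ∃ i, w i = 1 := by
  classical
  have hne : (univ.filter fun i => w i ≠ 0).Nonempty := by
    obtain ⟨i, -, hi⟩ := exists_ne_zero_of_sum_ne_zero (hw ▸ one_ne_zero)
    exact ⟨i, by simpa using hi⟩
  obtain ⟨i, hi⟩ := card_eq_one.1 (le_antisymm h hne.card_pos)
  exact ⟨i, by rw [← hw, ← sum_filter_ne_zero, hi, sum_singleton]⟩

namespace Association

variable {M N : Type*}

def load [Fintype M] (β x : N → M → ℝ) (i : N) : ℝ := ∑ j, β i j * x i j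

def assignMatrix [DecidableEq N] (a : M → N) : N → M → ℝ := fun i j => if a j = i then 1 else 0

structure IsFractional [Fintype N] (Nj : M → Finset N) (x : N → M → ℝ) : Prop where
  nonneg : ∀ i j, 0 ≤ x i j
  eq_zero_of_notMem : ∀ i j, i ∉ Nj j → x i j = 0
  sum_eq_one : ∀ j, ∑ i, x i j = 1

lemma isLinearMap_load [Fintype M] (β : N → M → ℝ) : IsLinearMap ℝ (load β) where
  map_add x y := by ext i; simp [load, mul_add, sum_add_distrib]
  map_smul c x := by
    ext i
    simp only [load, Pi.smul_apply, smul_eq_mul, mul_sum]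
    exact sum_congr rfl fun j _ => by ring

lemma load_assignMatrix_le [Fintype M] [DecidableEq N] {β x : N → M → ℝ} (hβ : ∀ i j, 0 ≤ β i j)
    (hx : ∀ i j, 0 ≤ x i j) {R : ℝ} (hR : 0 ≤ R) {a : M → N} {F : Finset M}
    (hF : ∀ j ∉ F, x (a j) j = 1) (hFR : ∀ j ∈ F, β (a j) j ≤ R) (i : N) :
    load β (assignMatrix a) i ≤ load β x i + #F * R := by
  classical
  have hterm : ∀ j, β i j * assignMatrix a i j ≤ β i j * x i j + if j ∈ F then R else 0 := by
    intro j
    have hβx := mul_nonneg (hβ i j) (hx i j)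
    unfold assignMatrix
    split_ifs with ha hj hj
    · subst ha
      linarith [hFR j hj]
    · subst ha
      rw [hF j hj]
      simp
    · linarith
    · simpa using hβx
  calc load β (assignMatrix a) i ≤ ∑ j, (β i j * x i j + if j ∈ F then R else 0) :=
        sum_le_sum fun j _ => hterm j
    _ = load β x i + #F * R := by
      rw [sum_add_distrib, sum_ite_mem, univ_inter, sum_const, nsmul_eq_mul]
      rfl

variable [Fintype N] {Nj : M → Finset N} {β x : N → M → ℝ}

lemma isFractional_assignMatrix [DecidableEq N] {a : M → N} (ha : ∀ j, a j ∈ Nj j) :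
    IsFractional Nj (assignMatrix a) where
  nonneg i j := by unfold assignMatrix; split_ifs <;> norm_num
  eq_zero_of_notMem i j hi := if_neg fun (h : a j = i) => hi (h ▸ ha j)
  sum_eq_one j := by simp [assignMatrix]

lemma feasBin_assignMatrix [DecidableEq N] {a : M → N} (ha : ∀ j, a j ∈ Nj j) :
    feasBin Nj (assignMatrix a) :=
  ⟨fun i j => by unfold assignMatrix; split_ifs <;> simp, fun j => by simp [assignMatrix, ha j]⟩

lemma IsFractional.maxLoad_eq [Fintype M] [Nonempty N] [DecidableEq N]
    (hx : IsFractional Nj x) :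
    maxLoad Nj β x = univ.sup' univ_nonempty (load β x) := by
  unfold maxLoad load
  congr 1
  funext i
  refine sum_filter_of_ne fun j _ hj => ?_
  by_contra hi
  exact hj (by rw [hx.eq_zero_of_notMem i j hi, mul_zero])

lemma sum_mul_load_assignMatrix [Fintype M] [DecidableEq N] (a : M → N) (w : N → ℝ) :
    ∑ i, w i * load β (assignMatrix a) i = ∑ j, β (a j) j * w (a j) := by
  simp only [load, assignMatrix, mul_sum]
  rw [sum_comm]
  refine sum_congr rfl fun j _ => ?_
  simp [mul_comm]

lemma convex_setOf_isFractional : Convex ℝ {x | IsFractional Nj x} := by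
  intro x hx y hy a b ha hb hab
  refine ⟨fun i j => ?_, fun i j hi => ?_, fun j => ?_⟩
  · simpa using add_nonneg (mul_nonneg ha (hx.nonneg i j)) (mul_nonneg hb (hy.nonneg i j))
  · simp [hx.eq_zero_of_notMem i j hi, hy.eq_zero_of_notMem i j hi]
  · simp [sum_add_distrib, ← mul_sum, hx.sum_eq_one j, hy.sum_eq_one j, hab]

lemma isCompact_setOf_isFractional : IsCompact {x | IsFractional Nj x} := by
  have hclosed : IsClosed {x | IsFractional Nj x} := by
    have : {x | IsFractional Nj x} = {x : N → M → ℝ | ∀ i j, 0 ≤ x i j} ∩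
        {x | ∀ i j, i ∉ Nj j → x i j = 0} ∩ {x | ∀ j, ∑ i, x i j = 1} := by
      ext x
      exact ⟨fun h => ⟨⟨h.1, h.2⟩, h.3⟩, fun ⟨⟨h₁, h₂⟩, h₃⟩ => ⟨h₁, h₂, h₃⟩⟩
    rw [this]
    simp only [Set.ofPred_forall]
    refine ((isClosed_iInter fun i => isClosed_iInter fun j => isClosed_le continuous_const
      (by fun_prop)).inter (isClosed_iInter fun i => isClosed_iInter fun j => isClosed_iInter
      fun _ => isClosed_eq (by fun_prop) continuous_const)).inter
      (isClosed_iInter fun j => isClosed_eq (by fun_prop) continuous_const)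
  refine (isCompact_Icc (b := 1)).of_isClosed_subset hclosed fun x hx => ⟨fun i j => hx.nonneg i j,
    fun i j => ?_⟩
  simpa [hx.sum_eq_one j] using single_le_sum (fun i _ => hx.nonneg i j) (mem_univ i)

def assignVec [DecidableEq N] [DecidableEq M] (β : N → M → ℝ) (p : N × M) :
    (N → ℝ) × (M → ℝ) :=
  (Pi.single p.1 (β p.1 p.2), Pi.single p.2 1)

lemma sum_smul_assignVec [Fintype M] [DecidableEq N] [DecidableEq M] (β y : N → M → ℝ) :
    ∑ p : N × M, y p.1 p.2 • assignVec β p = (load β y, fun j => ∑ i, y i j) := by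
  ext i
  · simp [assignVec, load, Fintype.sum_prod_type, Prod.fst_sum, Finset.sum_apply, Pi.single_apply,
      mul_comm]
  · rw [Fintype.sum_prod_type, sum_comm]
    simp [assignVec, Prod.snd_sum, Finset.sum_apply, Pi.single_apply]

lemma IsFractional.exists_sparse [Fintype M] (hx : IsFractional Nj x) (β : N → M → ℝ) :
    ∃ y, IsFractional Nj y ∧ load β y = load β x ∧
      #(univ.filter fun p : N × M => y p.1 p.2 ≠ 0) ≤ Fintype.card N + Fintype.card M := by
  classical
  obtain ⟨c, hc0, hcx, hsum, hind⟩ := exists_nonneg_sum_smul_eq_linearIndepOn (assignVec β)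
    (fun p : N × M => x p.1 p.2) fun p => hx.nonneg p.1 p.2
  have hc := sum_smul_assignVec β fun i j => c (i, j)
  simp only [Prod.mk.eta, hsum, sum_smul_assignVec, Prod.mk.injEq] at hc
  refine ⟨fun i j => c (i, j), ⟨fun i j => hc0 _, fun i j hi => hcx _ (hx.eq_zero_of_notMem i j hi),
    fun j => ?_⟩, hc.1.symm, ?_⟩
  · rw [← congrFun hc.2 j, hx.sum_eq_one j]
  · simpa [Module.finrank_prod] using hind.fintype_card_le_finrank

lemma IsFractional.card_filter_forall_ne_one_le [Fintype M] (hx : IsFractional Nj x)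
    (hsparse : #(univ.filter fun p : N × M => x p.1 p.2 ≠ 0) ≤ Fintype.card N + Fintype.card M) :
    #(univ.filter fun j => ∀ i, x i j ≠ 1) ≤ Fintype.card N := by
  classical
  have hcol : ∀ j, 1 + (if ∀ i, x i j ≠ 1 then 1 else 0) ≤ #(univ.filter fun i => x i j ≠ 0) := by
    intro j
    split_ifs with hj
    · by_contra! hlt
      obtain ⟨i, hi⟩ := exists_eq_one_of_sum_eq_one_of_card_le_one (hx.sum_eq_one j) (by omega)
      exact hj i hi
    · obtain ⟨i, -, hi⟩ := exists_ne_zero_of_sum_ne_zero (hx.sum_eq_one j ▸ one_ne_zero)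
      simpa using card_pos.2 ⟨i, by simpa using hi⟩
  have hcount : ∑ j, #(univ.filter fun i => x i j ≠ 0) =
      #(univ.filter fun p : N × M => x p.1 p.2 ≠ 0) := by
    simp only [card_filter, Fintype.sum_prod_type]
    exact sum_comm
  have := sum_le_sum fun j (_ : j ∈ univ) => hcol j
  rw [sum_add_distrib, ← card_filter, hcount, sum_const, card_univ, smul_eq_mul, mul_one] at this
  omega

theorem IsFractional.exists_assignMatrix_load_le [Fintype M] [DecidableEq N]
    (hx : IsFractional Nj x) (hβ : ∀ i j, 0 ≤ β i j) {m : M → N} (hm : ∀ j, m j ∈ Nj j) {R : ℝ}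
    (hR : 0 ≤ R) (hmR : ∀ j, β (m j) j ≤ R) :
    ∃ a : M → N, (∀ j, a j ∈ Nj j) ∧
      ∀ i, load β (assignMatrix a) i ≤ load β x i + Fintype.card N * R := by
  classical
  obtain ⟨y, hy, hyx, hsparse⟩ := hx.exists_sparse β
  let a j := if h : ∃ i, y i j = 1 then h.choose else m j
  have ha : ∀ j, a j ∈ Nj j := fun j => by
    by_cases h : ∃ i, y i j = 1
    · simp only [a, dif_pos h]
      by_contra hmem
      simpa [hy.eq_zero_of_notMem _ _ hmem] using h.choose_spec
    · simpa [a, dif_neg h] using hm j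
  refine ⟨a, ha, fun i => ?_⟩
  have hF := hy.card_filter_forall_ne_one_le hsparse
  refine (load_assignMatrix_le hβ hy.nonneg hR (F := univ.filter fun j => ∀ i, y i j ≠ 1)
    (fun j hj => ?_) (fun j hj => ?_) i).trans ?_
  · have h : ∃ i, y i j = 1 := by simpa using hj
    simpa [a, dif_pos h] using h.choose_spec
  · have h : ¬∃ i, y i j = 1 := by simpa using hj
    simpa [a, dif_neg h] using hmR j
  · rw [hyx]
    gcongr

theorem exists_le_dualFun [Fintype M] (hNj : ∀ j, (Nj j).Nonempty) (β : N → M → ℝ) {v : ℝ}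
    (hv : ∀ y, IsFractional Nj y → ∃ i, v ≤ load β y i) :
    ∃ w ∈ stdSimplex ℝ N, v ≤ dualFun Nj hNj β w := by
  classical
  obtain ⟨w, hw, hvw⟩ := exists_mem_stdSimplex_le_sum_mul
    (convex_setOf_isFractional.is_linear_image (isLinearMap_load β))
    ⟨_, _, isFractional_assignMatrix fun j => (hNj j).choose_spec, rfl⟩
    (by rintro _ ⟨y, hy, rfl⟩; exact hv y hy)
  choose m hm hmin using fun j => exists_mem_eq_inf' (hNj j) fun i => β i j * w i
  refine ⟨w, hw, (hvw _ ⟨_, isFractional_assignMatrix hm, rfl⟩).trans_eq ?_⟩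
  rw [sum_mul_load_assignMatrix, dualFun]
  exact sum_congr rfl fun j _ => (hmin j).symm

theorem exists_isFractional_isMinOn [Fintype M] [Nonempty N] (hNj : ∀ j, (Nj j).Nonempty)
    (β : N → M → ℝ) :
    ∃ x ∈ {x | IsFractional Nj x}, IsMinOn (fun y => univ.sup' univ_nonempty (load β y))
      {x | IsFractional Nj x} x := by
  classical
  refine isCompact_setOf_isFractional.exists_isMinOn
    ⟨_, isFractional_assignMatrix fun j => (hNj j).choose_spec⟩ ?_
  unfold load
  fun_prop

lemma bddBelow_maxLoad_feasBin [Fintype M] [Nonempty N] [DecidableEq N] (hβ : ∀ i j, 0 ≤ β i j) :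
    BddBelow {p : ℝ | ∃ x, feasBin Nj x ∧ p = maxLoad Nj β x} := by
  refine ⟨0, ?_⟩
  rintro _ ⟨x, hx, rfl⟩
  obtain ⟨i⟩ := ‹Nonempty N›
  refine le_sup'_of_le _ (mem_univ i) (sum_nonneg fun j _ => mul_nonneg (hβ i j) ?_)
  rcases hx.1 i j with h | h <;> simp [h]

lemma bddAbove_dualFun_stdSimplex [Fintype M] (hNj : ∀ j, (Nj j).Nonempty) (β : N → M → ℝ) :
    BddAbove {d : ℝ | ∃ w ∈ stdSimplex ℝ N, d = dualFun Nj hNj β w} := by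
  refine ((isCompact_stdSimplex ℝ N).bddAbove_image (f := dualFun Nj hNj β) ?_).mono ?_
  · unfold dualFun
    fun_prop
  · rintro _ ⟨w, hw, rfl⟩
    exact ⟨w, hw, rfl⟩

theorem sInf_maxLoad_feasBin_le [Fintype M] [Nonempty N] [DecidableEq N]
    (hβ : ∀ i j, 0 ≤ β i j) (hx : IsFractional Nj x) {m : M → N} (hm : ∀ j, m j ∈ Nj j)
    {R : ℝ} (hR : 0 ≤ R) (hmR : ∀ j, β (m j) j ≤ R) :
    sInf {p : ℝ | ∃ x, feasBin Nj x ∧ p = maxLoad Nj β x} ≤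
      univ.sup' univ_nonempty (load β x) + Fintype.card N * R := by
  obtain ⟨a, ha, hload⟩ := hx.exists_assignMatrix_load_le hβ hm hR hmR
  refine (csInf_le (bddBelow_maxLoad_feasBin hβ) ⟨_, feasBin_assignMatrix ha, rfl⟩).trans ?_
  rw [(isFractional_assignMatrix ha).maxLoad_eq]
  exact sup'_le _ _ fun i _ => (hload i).trans (by gcongr; exact le_sup' _ (mem_univ i))

end Association

open Association

/-- Duality gap bound (Theorem 1): `p* − d* ≤ (N+1)(ϱ + max_j ϱ_j)` with
`ϱ = max_{i,j} β i j` and `ϱ_j = min_{i ∈ N_j} β i j`; the bound does not depend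
on the number of clients. -/
theorem stmt_18 {M N : Type*} [Fintype M] [Fintype N] [Nonempty M] [Nonempty N]
    [DecidableEq N]
    (Nj : M → Finset N) (hNj : ∀ j, (Nj j).Nonempty)
    (β : N → M → ℝ) (hβ : ∀ i j, 0 < β i j ∧ β i j ≤ 1) :
    sInf {p : ℝ | ∃ x : N → M → ℝ, feasBin Nj x ∧ p = maxLoad Nj β x} -
        sSup {d : ℝ | ∃ lam ∈ stdSimplex ℝ N, d = dualFun Nj hNj β lam} ≤
      ((Fintype.card N : ℝ) + 1) *
        (Finset.univ.sup' Finset.univ_nonempty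
            (fun j => (Nj j).sup' (hNj j) (fun i => β i j)) +
          Finset.univ.sup' Finset.univ_nonempty
            (fun j => (Nj j).inf' (hNj j) (fun i => β i j))) := by
  obtain ⟨x, hx, hxmin⟩ := exists_isFractional_isMinOn hNj β
  set v := univ.sup' univ_nonempty (load β x)
  have hv : ∀ y, IsFractional Nj y → ∃ i, v ≤ load β y i := fun y hy => by
    obtain ⟨i, -, hi⟩ := exists_mem_eq_sup' univ_nonempty (load β y)
    exact ⟨i, hi ▸ hxmin hy⟩
  obtain ⟨w, hw, hvw⟩ := exists_le_dualFun hNj β hv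
  have hβ0 : ∀ i j, 0 ≤ β i j := fun i j => (hβ i j).1.le
  choose m hm hmβ using fun j => exists_mem_eq_inf' (hNj j) fun i => β i j
  set P := univ.sup' univ_nonempty fun j => (Nj j).inf' (hNj j) fun i => β i j
  set Q := univ.sup' univ_nonempty fun j => (Nj j).sup' (hNj j) fun i => β i j
  obtain ⟨j₀⟩ := ‹Nonempty M›
  have hP : 0 ≤ P := le_sup'_of_le _ (mem_univ j₀) (le_inf' _ _ fun i _ => hβ0 i j₀)
  have hQ : 0 ≤ Q :=
    le_sup'_of_le _ (mem_univ j₀) (le_sup'_of_le _ (hNj j₀).choose_spec (hβ0 _ _))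
  have hprimal := sInf_maxLoad_feasBin_le hβ0 hx hm hP fun j =>
    hmβ j ▸ le_sup' (fun j => (Nj j).inf' (hNj j) fun i => β i j) (mem_univ j)
  have hdual : v ≤ sSup {d : ℝ | ∃ lam ∈ stdSimplex ℝ N, d = dualFun Nj hNj β lam} :=
    hvw.trans (le_csSup (bddAbove_dualFun_stdSimplex hNj β) ⟨w, hw, rfl⟩)
  nlinarith [mul_nonneg (Nat.cast_nonneg (Fintype.card N) : (0 : ℝ) ≤ Fintype.card N) hQ]
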